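/- Let i ≠ j. For any X ⊆ U^α with C_j X = X, one has C_j (S^i_j X) = S^i_j (C_i X); consequently the map S^i_j carries C_j-closed sets bijectively onto C_i-closed sets, intertwining C_i on the source with C_j on the target. -/

import Mathlib

def cyl {α U : Type*} [DecidableEq α] (i : α) (X : Set (α → U)) : Set (α → U) :=
  {t | ∃ s ∈ X, ∃ u : U, t = Function.update s i u}

def substP {α U : Type*} [DecidableEq α] (i j : α) (X : Set (α → U)) : Set (α → U) :=
  {s | Function.update s i (s j) ∈ X}

/-!
With `cyl k = C_k` and `substP i j = S^i_j`: membership in `S^i_j X` ignores coordinate `i`, so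
`S^i_j X` is `C_i`-closed, and on `C_j`-closed sets `S^j_i` inverts `S^i_j`, since composing the
two substitutions only changes a coordinate that the set ignores.
-/

open Function

section Cylindrification

variable {α U : Type*} [DecidableEq α]

theorem mem_cyl_iff {k : α} {X : Set (α → U)} {t : α → U} :
    t ∈ cyl k X ↔ ∃ u, update t k u ∈ X := by
  constructor
  · rintro ⟨s, hs, u, rfl⟩
    exact ⟨s k, by simpa using hs⟩
  · rintro ⟨u, hu⟩
    exact ⟨_, hu, t k, by simp⟩

theorem cyl_eq_self_iff {k : α} {X : Set (α → U)} :
    cyl k X = X ↔ ∀ s u, update s k u ∈ X ↔ s ∈ X := by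
  simp only [Set.ext_iff, mem_cyl_iff]
  refine ⟨fun h s u => ⟨fun hu => (h s).1 ⟨u, hu⟩, fun hs => ?_⟩, fun h t => ?_⟩
  · exact (h (update s k u)).1 ⟨s k, by simpa using hs⟩
  · exact ⟨fun ⟨u, hu⟩ => (h t u).1 hu, fun ht => ⟨t k, (h t _).2 ht⟩⟩

theorem mem_substP_iff {i j : α} {X : Set (α → U)} {s : α → U} :
    s ∈ substP i j X ↔ update s i (s j) ∈ X := Iff.rfl

theorem update_mem_substP_iff {i j : α} (hij : i ≠ j) {X : Set (α → U)} (s : α → U) (u : U) :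
    update s i u ∈ substP i j X ↔ s ∈ substP i j X := by
  simp [mem_substP_iff, update_of_ne hij.symm]

theorem cyl_substP {i j : α} (hij : i ≠ j) (X : Set (α → U)) :
    cyl i (substP i j X) = substP i j X :=
  cyl_eq_self_iff.2 (update_mem_substP_iff hij)

theorem substP_substP {i j : α} (hij : i ≠ j) {Y : Set (α → U)} (hY : cyl i Y = Y) :
    substP i j (substP j i Y) = Y := by
  ext s
  rw [mem_substP_iff, mem_substP_iff, update_self, update_comm hij, update_eq_self,
    cyl_eq_self_iff.1 hY]

/-- Both sides consist of the `s` with `s[i := u] ∈ X` for some `u`. -/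
theorem cyl_substP_of_cyl_eq_self {i j : α} (hij : i ≠ j) {X : Set (α → U)}
    (hX : cyl j X = X) : cyl j (substP i j X) = substP i j (cyl i X) := by
  ext s
  simp only [mem_cyl_iff, mem_substP_iff, update_self, update_idem,
    update_comm hij.symm _ _ s, cyl_eq_self_iff.1 hX]

end Cylindrification

theorem stmt_11 {α U : Type*} [DecidableEq α] (i j : α) (hij : i ≠ j) :
    (∀ X : Set (α → U), cyl j X = X → cyl j (substP i j X) = substP i j (cyl i X)) ∧
    Set.BijOn (substP i j) {X : Set (α → U) | cyl j X = X} {X : Set (α → U) | cyl i X = X} :=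
  ⟨fun _ => cyl_substP_of_cyl_eq_self hij,
    Set.InvOn.bijOn ⟨fun _ hX => substP_substP hij.symm hX, fun _ hY => substP_substP hij hY⟩
      (fun X _ => cyl_substP hij X) (fun Y _ => cyl_substP hij.symm Y)⟩
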